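/- (Path reversal symmetry) For all integers l ≤ n, k ≤ m and nonzero complex a, b, q, complex p with |p| < 1, assuming all theta denominators nonzero, the elliptic binomial coefficient satisfies W(l,k;n,m; a,b) = W(-1-n,-m;-1-l,-k; a^{-1}, q b^{-1}). -/

import Mathlib

open Finset

noncomputable def pochInf (x p : ℂ) : ℂ := ∏' k : ℕ, (1 - x * p ^ k)

noncomputable def theta (x p : ℂ) : ℂ := pochInf x p * pochInf (p / x) p

noncomputable def qps (a q p : ℂ) (n : ℤ) : ℂ :=
  if 0 ≤ n then ∏ k ∈ Finset.range n.toNat, theta (a * q ^ (k : ℤ)) p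
  else (∏ k ∈ Finset.range (-n).toNat, theta (a * q ^ (n + k)) p)⁻¹
noncomputable def w (a b q p : ℂ) (n m : ℤ) : ℂ :=
  theta (a * q ^ (n + 2*m)) p * theta (b * q ^ (2*n)) p * theta (b * q ^ (2*n - 1)) p
    * theta (a * q ^ (1 - n) / b) p * theta (a * q ^ (-n) / b) p
  / (theta (a * q ^ n) p * theta (b * q ^ (2*n + m)) p * theta (b * q ^ (2*n + m - 1)) p
    * theta (a * q ^ (1 + m - n) / b) p * theta (a * q ^ (m - n) / b) p)
  * q ^ m

noncomputable def W (a b q p : ℂ) (l k n m : ℤ) : ℂ :=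
  (qps (q ^ (1 + n - l)) q p (m - k) * qps (a * q ^ (1 + n + 2*k)) q p (m - k)
    * qps (b * q ^ (1 + n + k + l)) q p (m - k) * qps (a * q ^ (1 + k - n) / b) q p (m - k))
  / (qps q q p (m - k) * qps (a * q ^ (1 + l + 2*k)) q p (m - k)
    * qps (b * q ^ (1 + 2*n + k)) q p (m - k) * qps (a * q ^ (1 + k - l) / b) q p (m - k))
  * ((qps (a * q ^ (1 + l + 2*k)) q p (n - l) * qps (a * q ^ (1 - n) / b) q p (n - l)
    * qps (a * q ^ (-n) / b) q p (n - l))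
  / (qps (a * q ^ (1 + l)) q p (n - l) * qps (a * q ^ (1 + k - n) / b) q p (n - l)
    * qps (a * q ^ (k - n) / b) q p (n - l)))
  * (qps (b * q ^ (1 + 2*l)) q p (2*n - 2*l) / qps (b * q ^ (1 + k + 2*l)) q p (2*n - 2*l))
  * q ^ ((n - l) * k)

noncomputable def GF (wt : ℤ → ℤ → ℂ) (l k : ℤ) : ℕ → ℕ → ℂ
  | 0, 0 => 1
  | 0, _ + 1 => 1
  | i + 1, 0 => GF wt l k i 0 * wt (l + i + 1) k
  | i + 1, j + 1 => GF wt l k (i + 1) j + GF wt l k i (j + 1) * wt (l + i + 1) (k + j + 1)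
termination_by i j => (i, j)

/-! Path reversal replaces every theta argument `x` of `W` by `x⁻¹` up to a power of `q`, and
`θ(1/x) = -θ(x)/x` turns a reversed shifted factorial `(x⁻¹;q,p)_N` back into `(x q^{1-N};q,p)_N`
times a monomial. Grouping the factors of `W` by their base `q`, `a`, `b` or `a/b`, the monomials of
each group collapse to one power of `q`, and what is left telescopes: with
`(c q^s;q,p)_N = (c;q,p)_{s+N} / (c;q,p)_s` both sides become the same quotient of values of
`t ↦ (c;q,p)_t` on `ℤ`. -/

lemma multipliable_one_sub_mul_pow (x : ℂ) {p : ℂ} (hp : ‖p‖ < 1) :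
    Multipliable fun k : ℕ => 1 - x * p ^ k := by
  simpa [sub_eq_add_neg] using
    Complex.multipliable_one_add_of_summable ((summable_geometric_of_norm_lt_one hp).mul_left x).neg

lemma pochInf_eq_one_sub_mul (x : ℂ) {p : ℂ} (hp : ‖p‖ < 1) :
    pochInf x p = (1 - x) * pochInf (x * p) p := by
  have hshift : (fun k : ℕ => 1 - x * p ^ (k + 1)) = fun k => 1 - x * p * p ^ k := by
    funext k; ring
  rw [pochInf, tprod_eq_zero_mul' (by rw [hshift]; exact multipliable_one_sub_mul_pow _ hp),
    hshift, pow_zero, mul_one, pochInf]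

lemma theta_inv {x p : ℂ} (hx : x ≠ 0) (hp : ‖p‖ < 1) : theta x⁻¹ p = -x⁻¹ * theta x p := by
  rw [theta, theta, pochInf_eq_one_sub_mul x hp, pochInf_eq_one_sub_mul x⁻¹ hp,
    div_inv_eq_mul, inv_mul_eq_div]
  field_simp
  ring

lemma qps_natCast (x q p : ℂ) (N : ℕ) :
    qps x q p N = ∏ j ∈ range N, theta (x * q ^ (j : ℤ)) p := by
  simp [qps]

lemma qps_inv {x q p : ℂ} (hx : x ≠ 0) (hq : q ≠ 0) (hp : ‖p‖ < 1) (N : ℕ) :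
    qps x⁻¹ q p N = (-x⁻¹) ^ N * q ^ N.choose 2 * qps (x * q ^ (1 - (N : ℤ))) q p N := by
  have hterm (j : ℕ) :
      theta (x⁻¹ * q ^ (j : ℤ)) p = -x⁻¹ * q ^ j * theta (x * q ^ (-(j : ℤ))) p := by
    rw [← inv_inv (q ^ (j : ℤ)), ← mul_inv, theta_inv (by simp [hx, hq]) hp, zpow_neg, zpow_natCast]
    field_simp
  have hreflect : ∏ j ∈ range N, theta (x * q ^ (-(j : ℤ))) p
      = ∏ j ∈ range N, theta (x * q ^ (1 - (N : ℤ) + j)) p := by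
    rw [← prod_range_reflect]
    refine prod_congr rfl fun j hj => ?_
    have := mem_range.1 hj
    congr 3
    omega
  rw [qps_natCast, qps_natCast, prod_congr rfl fun j _ => hterm j, prod_mul_distrib,
    prod_mul_distrib, prod_const, card_range, prod_pow_eq_pow_sum, sum_range_id,
    ← Nat.choose_two_right, hreflect]
  simp only [zpow_add₀ hq, ← mul_assoc, zpow_natCast]

lemma qps_inv_mul_zpow_div {c q p : ℂ} (hc : c ≠ 0) (hq : q ≠ 0) (hp : ‖p‖ < 1) (u v : ℤ)
    {N : ℤ} (hN : 0 ≤ N) :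
    qps (c⁻¹ * q ^ u) q p N / qps (c⁻¹ * q ^ v) q p N
      = q ^ ((u - v) * N)
        * (qps (c * q ^ (1 - u - N)) q p N / qps (c * q ^ (1 - v - N)) q p N) := by
  lift N to ℕ using hN
  have hinv (w : ℤ) : c⁻¹ * q ^ w = (c * q ^ (-w))⁻¹ := by rw [mul_inv, zpow_neg, inv_inv]
  have hcq (w : ℤ) : c * q ^ (-w) ≠ 0 := mul_ne_zero hc (zpow_ne_zero _ hq)
  have hshift (w : ℤ) : c * q ^ (-w) * q ^ (1 - (N : ℤ)) = c * q ^ (1 - w - N) := by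
    rw [mul_assoc, ← zpow_add₀ hq]; ring_nf
  have hratio : -(c * q ^ (-u))⁻¹ = q ^ (u - v) * -(c * q ^ (-v))⁻¹ := by
    rw [zpow_sub₀ hq, zpow_neg, zpow_neg]; field_simp
  set Y := (-(c * q ^ (-v))⁻¹) ^ N * q ^ N.choose 2
  have hY : Y ≠ 0 :=
    mul_ne_zero (pow_ne_zero _ (neg_ne_zero.2 (inv_ne_zero (hcq v)))) (pow_ne_zero _ hq)
  rw [hinv, hinv, qps_inv (hcq u) hq hp, qps_inv (hcq v) hq hp, hshift, hshift, hratio, mul_pow,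
    ← zpow_natCast (q ^ (u - v)), ← zpow_mul]
  calc _ = Y * (q ^ ((u - v) * N) * qps (c * q ^ (1 - u - N)) q p N)
        / (Y * qps (c * q ^ (1 - v - N)) q p N) := by ring
    _ = _ := by rw [mul_div_mul_left _ _ hY, mul_div_assoc]

lemma qps_neg_natCast (x q p : ℂ) (N : ℕ) :
    qps x q p (-(N : ℤ)) = (∏ j ∈ range N, theta (x * q ^ (-(N : ℤ) + j)) p)⁻¹ := by
  rcases N with _ | N
  · simp [qps]
  · rw [qps, if_neg (by omega)]
    simp

lemma qps_add_one {x q p : ℂ} {t : ℤ} (h : theta (x * q ^ t) p ≠ 0) :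
    qps x q p (t + 1) = qps x q p t * theta (x * q ^ t) p := by
  rcases le_or_gt 0 t with ht | ht
  · lift t to ℕ using ht
    rw [← Nat.cast_one, ← Nat.cast_add, qps_natCast, qps_natCast, prod_range_succ]
  · obtain ⟨M, rfl⟩ : ∃ M : ℕ, t = -(M + 1 : ℕ) := ⟨(-t - 1).toNat, by omega⟩
    have hM : -((M + 1 : ℕ) : ℤ) + 1 = -(M : ℤ) := by push_cast; ring
    rw [hM, qps_neg_natCast, qps_neg_natCast, prod_range_succ', Nat.cast_zero, add_zero, mul_inv,
      inv_mul_cancel_right₀ h]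
    refine congrArg _ (prod_congr rfl fun j _ => ?_)
    push_cast
    ring_nf

section FixedBase

variable {c q p : ℂ}

lemma qps_ne_zero (hc : ∀ i : ℤ, theta (c * q ^ i) p ≠ 0) (t : ℤ) : qps c q p t ≠ 0 := by
  unfold qps
  split_ifs
  · exact prod_ne_zero_iff.2 fun _ _ => hc _
  · exact inv_ne_zero (prod_ne_zero_iff.2 fun _ _ => hc _)

lemma qps_add (hq : q ≠ 0) (hc : ∀ i : ℤ, theta (c * q ^ i) p ≠ 0) (s N : ℤ) :
    qps c q p (s + N) = qps c q p s * qps (c * q ^ s) q p N := by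
  have hstep (t : ℤ) : theta (c * q ^ s * q ^ t) p = theta (c * q ^ (s + t)) p := by
    rw [mul_assoc, ← zpow_add₀ hq]
  have hc' (t : ℤ) : theta (c * q ^ s * q ^ t) p ≠ 0 := hstep t ▸ hc _
  induction N using Int.induction_on with
  | zero => simp [qps]
  | succ N ih =>
    rw [← add_assoc, qps_add_one (hc _), qps_add_one (hc' _), ih, hstep, mul_assoc]
  | pred N ih =>
    have h1 := qps_add_one (x := c) (hc (s + (-N - 1)))
    have h2 := qps_add_one (x := c * q ^ s) (hc' (-N - 1))
    rw [show s + (-(N : ℤ) - 1) + 1 = s + -N by ring] at h1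
    rw [show -(N : ℤ) - 1 + 1 = -N by ring, hstep] at h2
    apply mul_right_cancel₀ (hc (s + (-N - 1)))
    rw [← h1, ih, h2, mul_assoc]

lemma qps_mul_zpow (hq : q ≠ 0) (hc : ∀ i : ℤ, theta (c * q ^ i) p ≠ 0) (s N : ℤ) :
    qps (c * q ^ s) q p N = qps c q p (s + N) / qps c q p s := by
  rw [qps_add hq hc, mul_div_cancel_left₀ _ (qps_ne_zero hc s)]

end FixedBase

lemma zpow_mul_mul_zpow_mul {q : ℂ} (hq : q ≠ 0) (e f : ℤ) (x y : ℂ) :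
    q ^ e * x * (q ^ f * y) = q ^ (e + f) * (x * y) := by
  rw [zpow_add₀ hq]; ring

noncomputable def W.qFactor (q p : ℂ) (l k n m : ℤ) : ℂ :=
  qps (q ^ (1 + n - l)) q p (m - k) / qps q q p (m - k)

noncomputable def W.aFactor (a q p : ℂ) (l k n m : ℤ) : ℂ :=
  qps (a * q ^ (1 + n + 2*k)) q p (m - k) / qps (a * q ^ (1 + l + 2*k)) q p (m - k)
    * (qps (a * q ^ (1 + l + 2*k)) q p (n - l) / qps (a * q ^ (1 + l)) q p (n - l))

noncomputable def W.bFactor (b q p : ℂ) (l k n m : ℤ) : ℂ :=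
  qps (b * q ^ (1 + n + k + l)) q p (m - k) / qps (b * q ^ (1 + 2*n + k)) q p (m - k)
    * (qps (b * q ^ (1 + 2*l)) q p (2*n - 2*l) / qps (b * q ^ (1 + k + 2*l)) q p (2*n - 2*l))

noncomputable def W.abFactor (c q p : ℂ) (l k n m : ℤ) : ℂ :=
  qps (c * q ^ (1 + k - n)) q p (m - k) / qps (c * q ^ (1 + k - l)) q p (m - k)
    * (qps (c * q ^ (1 - n)) q p (n - l) / qps (c * q ^ (1 + k - n)) q p (n - l))
    * (qps (c * q ^ (-n)) q p (n - l) / qps (c * q ^ (k - n)) q p (n - l))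

lemma W_eq_factors (a b q p : ℂ) (l k n m : ℤ) :
    W a b q p l k n m = W.qFactor q p l k n m * W.aFactor a q p l k n m
      * W.bFactor b q p l k n m * W.abFactor (a / b) q p l k n m * q ^ ((n - l) * k) := by
  have hab (e : ℤ) : a * q ^ e / b = a / b * q ^ e := by ring
  simp only [W, W.qFactor, W.aFactor, W.bFactor, W.abFactor, hab]
  ring

section Reversal

variable {q p : ℂ} {l k n m : ℤ}

lemma W.qFactor_reverse : W.qFactor q p (-1 - n) (-m) (-1 - l) (-k) = W.qFactor q p l k n m := by
  simp only [W.qFactor]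
  ring_nf

lemma W.aFactor_reverse {a : ℂ} (ha : a ≠ 0) (hq : q ≠ 0) (hp : ‖p‖ < 1)
    (hG : ∀ i : ℤ, theta (a * q ^ i) p ≠ 0) (hln : l ≤ n) (hkm : k ≤ m) :
    W.aFactor a⁻¹ q p (-1 - n) (-m) (-1 - l) (-k)
      = q ^ (-((n - l) * (m + k))) * W.aFactor a q p l k n m := by
  rw [W.aFactor, W.aFactor, qps_inv_mul_zpow_div ha hq hp _ _ (by omega),
    qps_inv_mul_zpow_div ha hq hp _ _ (by omega), zpow_mul_mul_zpow_mul hq]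
  congr 1
  · congr 1; ring
  · simp only [qps_mul_zpow hq hG]
    ring_nf
    field_simp [qps_ne_zero hG]

lemma W.bFactor_reverse {b : ℂ} (hb : b ≠ 0) (hq : q ≠ 0) (hp : ‖p‖ < 1)
    (hG : ∀ i : ℤ, theta (b * q ^ i) p ≠ 0) (hln : l ≤ n) (hkm : k ≤ m) :
    W.bFactor (q * b⁻¹) q p (-1 - n) (-m) (-1 - l) (-k)
      = q ^ ((n - l) * (m + k)) * W.bFactor b q p l k n m := by
  have hshift (e : ℤ) : q * b⁻¹ * q ^ e = b⁻¹ * q ^ (e + 1) := by rw [zpow_add_one₀ hq]; ring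
  rw [W.bFactor, W.bFactor]
  simp only [hshift]
  rw [qps_inv_mul_zpow_div hb hq hp _ _ (by omega),
    qps_inv_mul_zpow_div hb hq hp _ _ (by omega), zpow_mul_mul_zpow_mul hq]
  congr 1
  · congr 1; ring
  · simp only [qps_mul_zpow hq hG]
    ring_nf
    field_simp [qps_ne_zero hG]

lemma W.abFactor_reverse {c : ℂ} (hc : c ≠ 0) (hq : q ≠ 0) (hp : ‖p‖ < 1)
    (hG : ∀ i : ℤ, theta (c * q ^ i) p ≠ 0) (hln : l ≤ n) (hkm : k ≤ m) :
    W.abFactor (q⁻¹ * c⁻¹) q p (-1 - n) (-m) (-1 - l) (-k)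
      = q ^ ((n - l) * (m + k)) * W.abFactor c q p l k n m := by
  have hshift (e : ℤ) : q⁻¹ * c⁻¹ * q ^ e = c⁻¹ * q ^ (e - 1) := by
    rw [zpow_sub_one₀ hq]; ring
  rw [W.abFactor, W.abFactor]
  simp only [hshift]
  rw [qps_inv_mul_zpow_div hc hq hp _ _ (by omega), qps_inv_mul_zpow_div hc hq hp _ _ (by omega),
    qps_inv_mul_zpow_div hc hq hp _ _ (by omega), zpow_mul_mul_zpow_mul hq,
    zpow_mul_mul_zpow_mul hq]
  congr 1
  · congr 1; ring
  · simp only [qps_mul_zpow hq hG]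
    ring_nf
    field_simp [qps_ne_zero hG]

end Reversal

theorem elliptic_binomial_path_reversal (a b q p : ℂ) (ha : a ≠ 0) (hb : b ≠ 0) (hq : q ≠ 0)
    (hp : ‖p‖ < 1)
    (h : ∀ i : ℤ, theta (a * q ^ i) p ≠ 0 ∧ theta (b * q ^ i) p ≠ 0
      ∧ theta (a * q ^ i / b) p ≠ 0 ∧ theta (a⁻¹ * q ^ i) p ≠ 0
      ∧ theta (b⁻¹ * q ^ i) p ≠ 0 ∧ theta (a⁻¹ * b * q ^ i) p ≠ 0
      ∧ (1 ≤ i → theta (q ^ i) p ≠ 0))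
    (l k n m : ℤ) (hln : l ≤ n) (hkm : k ≤ m) :
    W a b q p l k n m = W a⁻¹ (q * b⁻¹) q p (-1 - n) (-m) (-1 - l) (-k) := by
  have hab : a⁻¹ / (q * b⁻¹) = q⁻¹ * (a / b)⁻¹ := by field_simp
  have hGab (i : ℤ) : theta (a / b * q ^ i) p ≠ 0 := by
    rw [← mul_div_right_comm]; exact (h i).2.2.1
  have hpow : q ^ (-((n - l) * (m + k))) * q ^ ((n - l) * (m + k)) * q ^ ((n - l) * (m + k))
      * q ^ ((-1 - l - (-1 - n)) * -m) = q ^ ((n - l) * k) := by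
    simp only [← zpow_add₀ hq]
    ring_nf
  rw [W_eq_factors, W_eq_factors, hab, W.qFactor_reverse,
    W.aFactor_reverse ha hq hp (h · |>.1) hln hkm, W.bFactor_reverse hb hq hp (h · |>.2.1) hln hkm,
    W.abFactor_reverse (div_ne_zero ha hb) hq hp hGab hln hkm]
  linear_combination -(W.qFactor q p l k n m * W.aFactor a q p l k n m * W.bFactor b q p l k n m
    * W.abFactor (a / b) q p l k n m) * hpow
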